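/- arXiv:2506.17305 — 3 statements merged into one kernel-verified Lean document; each statement's English description precedes it below -/
import Mathlib

section
/- Let σ : ℝ → ℝ be continuously differentiable, fix discretisation points T_1, …, T_N ∈ ℝ^d and target values f_1, …, f_N ∈ ℝ, and for X = (a_1, …, a_n, w^1, …, w^n, w_0^1, …, w_0^n) set dev_i(X) = Σ_{j=1}^n a_j σ(w^j·T_i + w_0^j) − f_i and F(X) = max_{1≤i≤N} |dev_i(X)|. Suppose X* is a local minimizer of F with F(X*) > 0, let P = {i : dev_i(X*) = F(X*)}, N = {i : dev_i(X*) = −F(X*)}, and let V_i ∈ ℝ^{n(1+d)+n} be the vector whose j-th block (j = 1, …, n) is a_j* σ'(w^{j*}·T_i + w_0^{j*})·(1, T_i) and whose final n entries are σ(w^{1*}·T_i + w_0^{1*}), …, σ(w^{n*}·T_i + w_0^{n*}), all evaluated at X*. Then there exist λ_i ≥ 0 for i ∈ P ∪ N with Σ_{i∈P∪N} λ_i = 1 and Σ_{i∈P} λ_i V_i = Σ_{i∈N} λ_i V_i. -/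
/-- The deviation at the `i`-th discretisation point for a neural network with one hidden
layer of `n` nodes, parameters `X = (a, w, w₀)`:
`dev_i(X) = ∑_{j=1}^n a_j σ(w^j ⬝ T_i + w₀^j) − f_i`. -/
noncomputable def dev {d N n : ℕ} (σ : ℝ → ℝ) (T : Fin N → Fin d → ℝ) (f : Fin N → ℝ)
    (X : (Fin n → ℝ) × (Fin n → Fin d → ℝ) × (Fin n → ℝ)) (i : Fin N) : ℝ :=
  (∑ j, X.1 j * σ ((∑ k, X.2.1 j k * T i k) + X.2.2 j)) - f i

/-- The uniform (Chebyshev/max) loss `F(X) = max_{1 ≤ i ≤ N} |dev_i(X)|`. -/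
noncomputable def unifLoss {d N n : ℕ} [NeZero N] (σ : ℝ → ℝ) (T : Fin N → Fin d → ℝ)
    (f : Fin N → ℝ) (X : (Fin n → ℝ) × (Fin n → Fin d → ℝ) × (Fin n → ℝ)) : ℝ :=
  Finset.univ.sup' Finset.univ_nonempty fun i => |dev σ T f X i|

/-- The vector `V_i ∈ ℝ^{n(1+d)+n}` (realized as `(Fin n → Fin (d+1) → ℝ) × (Fin n → ℝ)`):
the `j`-th block is `a_j σ'(w^j ⬝ T_i + w₀^j) • (1, T_i) ∈ ℝ^{1+d}` and the final `n`
entries are `σ(w^1 ⬝ T_i + w₀^1), …, σ(w^n ⬝ T_i + w₀^n)`. -/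
noncomputable def Vvec {d N n : ℕ} (σ : ℝ → ℝ) (T : Fin N → Fin d → ℝ)
    (X : (Fin n → ℝ) × (Fin n → Fin d → ℝ) × (Fin n → ℝ)) (i : Fin N) :
    (Fin n → Fin (d + 1) → ℝ) × (Fin n → ℝ) :=
  (fun j => (X.1 j * deriv σ ((∑ k, X.2.1 j k * T i k) + X.2.2 j)) •
      (Fin.cons 1 (T i) : Fin (d + 1) → ℝ),
   fun j => σ ((∑ k, X.2.1 j k * T i k) + X.2.2 j))

/-! If no convex combination of the signed vectors `sᵢ Vᵢ` of the extremal points (`sᵢ = ±1`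
the sign of `dev_i`) vanished, Hahn–Banach would give a functional `L` negative on all of them
(Gordan's alternative). `L` is realised by a parameter direction along which `dev_i` has
derivative `L Vᵢ`, so moving along it pushes every extremal deviation strictly towards `0` while
the other deviations stay below the maximum by continuity: the loss decreases, contradicting local
minimality. -/

open Finset Filter Topology

theorem Finset.exists_weights_of_mem_convexHull_image {R E ι : Type*} [Field R] [LinearOrder R]
    [IsStrictOrderedRing R] [AddCommGroup E] [Module R E] {s : Finset ι}
    {g : ι → E} {x : E} (hx : x ∈ convexHull R (g '' s)) :
    ∃ w : ι → R, (∀ i ∈ s, 0 ≤ w i) ∧ ∑ i ∈ s, w i = 1 ∧ ∑ i ∈ s, w i • g i = x := by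
  classical
  suffices convexHull R (g '' s) ⊆
      {y | ∃ w : ι → R, (∀ i ∈ s, 0 ≤ w i) ∧ ∑ i ∈ s, w i = 1 ∧ ∑ i ∈ s, w i • g i = y} from
    this hx
  refine convexHull_min ?_ ?_
  · rintro _ ⟨i, hi : i ∈ s, rfl⟩
    refine ⟨Pi.single i 1, fun j _ => ?_, ?_, ?_⟩
    · by_cases hj : j = i <;> simp [hj]
    · simp [Pi.single_apply, hi]
    · simp [Pi.single_apply, hi]
  · rintro _ ⟨w, hw0, hw1, rfl⟩ _ ⟨w', hw0', hw1', rfl⟩ a b ha hb hab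
    refine ⟨a • w + b • w', fun i hi => ?_, ?_, ?_⟩
    · simp only [Pi.add_apply, Pi.smul_apply, smul_eq_mul]
      exact add_nonneg (mul_nonneg ha (hw0 i hi)) (mul_nonneg hb (hw0' i hi))
    · simp only [Pi.add_apply, Pi.smul_apply, smul_eq_mul, sum_add_distrib, ← mul_sum, hw1,
        hw1', mul_one, hab]
    · simp only [Pi.add_apply, Pi.smul_apply, smul_eq_mul, add_smul, mul_smul, sum_add_distrib,
        smul_sum]

theorem exists_weights_sum_smul_eq_zero_of_forall_dual {E ι : Type*} [TopologicalSpace E]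
    [AddCommGroup E] [Module ℝ E] [IsTopologicalAddGroup E] [ContinuousSMul ℝ E]
    [LocallyConvexSpace ℝ E] [T1Space E] {s : Finset ι} {g : ι → E}
    (h : ∀ L : StrongDual ℝ E, ∃ i ∈ s, 0 ≤ L (g i)) :
    ∃ w : ι → ℝ, (∀ i ∈ s, 0 ≤ w i) ∧ ∑ i ∈ s, w i = 1 ∧ ∑ i ∈ s, w i • g i = 0 := by
  by_contra hw
  have h0 : (0 : E) ∉ convexHull ℝ (g '' s) := fun h0 =>
    hw (exists_weights_of_mem_convexHull_image h0)
  obtain ⟨L, u, v, hLu, huv, hv0⟩ := geometric_hahn_banach_compact_closed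
    (convex_convexHull ℝ _) ((s.finite_toSet.image g).isCompact_convexHull (𝕜 := ℝ))
    (convex_singleton 0) isClosed_singleton (Set.disjoint_singleton_right.2 h0)
  obtain ⟨i, hi, hLi⟩ := h L
  have hLgi : L (g i) < u := hLu (g i) (subset_convexHull ℝ _ ⟨i, hi, rfl⟩)
  have hv : v < 0 := by simpa using hv0 0 rfl
  linarith

theorem HasDerivAt.eventually_nhdsGT_lt {u : ℝ → ℝ} {D a M : ℝ} (hu : HasDerivAt u D a)
    (hle : u a ≤ M) (hD : u a = M → D < 0) : ∀ᶠ t in 𝓝[>] a, u t < M := by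
  rcases hle.lt_or_eq with hlt | heq
  · exact (hu.continuousAt.eventually_lt_const hlt).filter_mono nhdsWithin_le_nhds
  · filter_upwards [hu.hasDerivWithinAt.limsup_slope_le' (lt_irrefl a) (hD heq),
      self_mem_nhdsWithin] with t hslope hat
    exact heq ▸ (slope_neg_iff_of_le (f := u) hat.le).1 hslope

theorem HasDerivAt.eventually_nhdsGT_abs_lt {u : ℝ → ℝ} {D a M : ℝ} (hu : HasDerivAt u D a)
    (hle : |u a| ≤ M) (hpos : u a = M → D < 0) (hneg : u a = -M → 0 < D) :
    ∀ᶠ t in 𝓝[>] a, |u t| < M := by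
  have hupper : ∀ᶠ t in 𝓝[>] a, u t < M := hu.eventually_nhdsGT_lt (le_of_abs_le hle) hpos
  have hlower : ∀ᶠ t in 𝓝[>] a, -u t < M := hu.neg.eventually_nhdsGT_lt
    (by simpa [neg_le] using neg_le_of_abs_le hle) fun h => by
      simpa using hneg (by simpa using neg_eq_iff_eq_neg.1 h)
  filter_upwards [hupper, hlower] with t h1 h2
  exact abs_lt.2 ⟨neg_lt.1 h2, h1⟩

theorem not_isLocalMin_sup'_abs_of_hasDerivAt {ι E : Type*} [Fintype ι] [Nonempty ι]
    [TopologicalSpace E] [AddCommGroup E] [Module ℝ E] [ContinuousAdd E] [ContinuousSMul ℝ E]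
    {φ : ι → E → ℝ} {x h : E} {D : ι → ℝ}
    (hD : ∀ i, HasDerivAt (fun t : ℝ => φ i (x + t • h)) (D i) 0)
    (hpos : ∀ i, φ i x = univ.sup' univ_nonempty (fun j => |φ j x|) → D i < 0)
    (hneg : ∀ i, φ i x = -univ.sup' univ_nonempty (fun j => |φ j x|) → 0 < D i) :
    ¬ IsLocalMin (fun y => univ.sup' univ_nonempty fun i => |φ i y|) x := by
  intro hmin
  set F := fun y => univ.sup' univ_nonempty fun i => |φ i y|
  have hdecr : ∀ᶠ t in 𝓝[>] (0 : ℝ), F (x + t • h) < F x := by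
    have hall : ∀ᶠ t in 𝓝[>] (0 : ℝ), ∀ i, |φ i (x + t • h)| < F x :=
      eventually_all.2 fun i => (hD i).eventually_nhdsGT_abs_lt
        (by simpa using le_sup' (fun j => |φ j x|) (mem_univ i))
        (by simpa using hpos i) (by simpa using hneg i)
    filter_upwards [hall] with t ht
    exact (sup'_lt_iff _).2 fun i _ => ht i
  have hline : Tendsto (fun t : ℝ => x + t • h) (𝓝 0) (𝓝 x) :=
    (continuous_const.add (continuous_id.smul continuous_const)).tendsto' 0 x (by simp)
  have hincr : ∀ᶠ t in 𝓝[>] (0 : ℝ), F x ≤ F (x + t • h) :=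
    (hline.eventually hmin).filter_mono nhdsWithin_le_nhds
  obtain ⟨t, hlt, hle⟩ := (hdecr.and hincr).exists
  exact hlt.not_ge hle

section Network

variable {d N n : ℕ}

def preact (T : Fin N → Fin d → ℝ) (X : (Fin n → ℝ) × (Fin n → Fin d → ℝ) × (Fin n → ℝ))
    (i : Fin N) (j : Fin n) : ℝ :=
  (∑ k, X.2.1 j k * T i k) + X.2.2 j

theorem preact_add_smul (T : Fin N → Fin d → ℝ)
    (X h : (Fin n → ℝ) × (Fin n → Fin d → ℝ) × (Fin n → ℝ)) (t : ℝ) (i : Fin N) (j : Fin n) :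
    preact T (X + t • h) i j = preact T X i j + t * preact T h i j := by
  simp only [preact, Prod.fst_add, Prod.snd_add, Prod.smul_fst, Prod.smul_snd, Pi.add_apply,
    Pi.smul_apply, smul_eq_mul, add_mul, sum_add_distrib, mul_add, mul_sum, mul_assoc]
  ring

theorem hasDerivAt_dev_add_smul {σ : ℝ → ℝ} (hσ : Differentiable ℝ σ) (T : Fin N → Fin d → ℝ)
    (f : Fin N → ℝ) (X h : (Fin n → ℝ) × (Fin n → Fin d → ℝ) × (Fin n → ℝ)) (i : Fin N) :
    HasDerivAt (fun t : ℝ => dev σ T f (X + t • h) i)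
      (∑ j, (h.1 j * σ (preact T X i j) + X.1 j * (deriv σ (preact T X i j) * preact T h i j)))
      0 := by
  have hline : (fun t : ℝ => dev σ T f (X + t • h) i) = fun t =>
      (∑ j, (X.1 j + t * h.1 j) * σ (preact T X i j + t * preact T h i j)) - f i := by
    funext t
    change (∑ j, (X + t • h).1 j * σ (preact T (X + t • h) i j)) - f i = _
    simp [preact_add_smul]
  rw [hline]
  refine (HasDerivAt.fun_sum fun j _ => ?_).sub_const (f i)
  have hweight : HasDerivAt (fun t : ℝ => X.1 j + t * h.1 j) (h.1 j) 0 := by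
    simpa using ((hasDerivAt_id (0 : ℝ)).mul_const (h.1 j)).const_add (X.1 j)
  have hpre : HasDerivAt (fun t : ℝ => preact T X i j + t * preact T h i j) (preact T h i j) 0 := by
    simpa using ((hasDerivAt_id (0 : ℝ)).mul_const (preact T h i j)).const_add (preact T X i j)
  have hact := (hσ (preact T X i j)).hasDerivAt.comp_of_eq 0 hpre (by simp)
  exact (hweight.fun_mul hact).congr_deriv (by simp)

theorem LinearMap.apply_prod_pi_eq_sum {R M ι κ : Type*} [CommSemiring R] [AddCommMonoid M]
    [Module R M] [Fintype ι] [Fintype κ] [DecidableEq ι] [DecidableEq κ]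
    (L : ((ι → κ → R) × (ι → R)) →ₗ[R] M) (v : (ι → κ → R) × (ι → R)) :
    L v = ∑ j, ∑ k, v.1 j k • L (Pi.single j (Pi.single k 1), 0)
      + ∑ j, v.2 j • L (0, Pi.single j 1) := by
  have hv : v = ∑ j, ∑ k, v.1 j k • ((Pi.single j (Pi.single k 1), 0) : (ι → κ → R) × (ι → R))
      + ∑ j, v.2 j • ((0, Pi.single j 1) : (ι → κ → R) × (ι → R)) := by
    ext <;> simp [Prod.fst_sum, Prod.snd_sum, Finset.sum_apply, Pi.single_apply]
  conv_lhs => rw [hv]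
  simp only [map_add, map_sum, map_smul]

def paramsOfDual (L : Module.Dual ℝ ((Fin n → Fin (d + 1) → ℝ) × (Fin n → ℝ))) :
    (Fin n → ℝ) × (Fin n → Fin d → ℝ) × (Fin n → ℝ) :=
  (fun j => L (0, Pi.single j 1), fun j k => L (Pi.single j (Pi.single k.succ 1), 0),
    fun j => L (Pi.single j (Pi.single 0 1), 0))

theorem hasDerivAt_dev_add_smul_paramsOfDual {σ : ℝ → ℝ} (hσ : Differentiable ℝ σ)
    (T : Fin N → Fin d → ℝ) (f : Fin N → ℝ) (X : (Fin n → ℝ) × (Fin n → Fin d → ℝ) × (Fin n → ℝ))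
    (L : Module.Dual ℝ ((Fin n → Fin (d + 1) → ℝ) × (Fin n → ℝ))) (i : Fin N) :
    HasDerivAt (fun t : ℝ => dev σ T f (X + t • paramsOfDual L) i) (L (Vvec σ T X i)) 0 := by
  convert hasDerivAt_dev_add_smul hσ T f X (paramsOfDual L) i using 1
  rw [L.apply_prod_pi_eq_sum, ← sum_add_distrib]
  refine sum_congr rfl fun j _ => ?_
  simp only [Vvec, preact, paramsOfDual, Pi.smul_apply, smul_eq_mul, Fin.sum_univ_succ,
    Fin.cons_zero, Fin.cons_succ, mul_add, mul_sum, mul_comm (L _) (T i _), mul_assoc]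
  ring

end Network

theorem uniform_one_hidden_layer_necessary_condition_general (d N n : ℕ) [NeZero N]
    (σ : ℝ → ℝ) (hσ : ContDiff ℝ 1 σ) (T : Fin N → Fin d → ℝ) (f : Fin N → ℝ)
    (Xs : (Fin n → ℝ) × (Fin n → Fin d → ℝ) × (Fin n → ℝ))
    (hmin : IsLocalMin (unifLoss σ T f) Xs)
    (hpos : 0 < unifLoss σ T f Xs)
    (P Np : Finset (Fin N))
    (hP : ∀ i, i ∈ P ↔ dev σ T f Xs i = unifLoss σ T f Xs)
    (hNp : ∀ i, i ∈ Np ↔ dev σ T f Xs i = -unifLoss σ T f Xs) :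
    ∃ lam : Fin N → ℝ, (∀ i ∈ P ∪ Np, 0 ≤ lam i) ∧
      (∑ i ∈ P ∪ Np, lam i) = 1 ∧
      (∑ i ∈ P, lam i • Vvec σ T Xs i) = ∑ i ∈ Np, lam i • Vvec σ T Xs i := by
  have hdisj : Disjoint P Np := disjoint_left.2 fun i hiP hiNp => by
    linarith [(hP i).1 hiP, (hNp i).1 hiNp, hpos]
  let g i := if i ∈ P then Vvec σ T Xs i else -Vvec σ T Xs i
  obtain ⟨lam, hlam0, hlam1, hlamg⟩ :=
    exists_weights_sum_smul_eq_zero_of_forall_dual (s := P ∪ Np) (g := g) fun L => by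
      by_contra! hdescent
      refine not_isLocalMin_sup'_abs_of_hasDerivAt (φ := fun i X => dev σ T f X i)
        (hasDerivAt_dev_add_smul_paramsOfDual (hσ.differentiable one_ne_zero) T f Xs L)
        (fun i hi => ?_) (fun i hi => ?_) hmin
      · have hiP : i ∈ P := (hP i).2 hi
        simpa [g, hiP] using hdescent i (mem_union_left _ hiP)
      · have hiNp : i ∈ Np := (hNp i).2 hi
        simpa [g, disjoint_right.1 hdisj hiNp] using hdescent i (mem_union_right _ hiNp)
  refine ⟨lam, hlam0, hlam1, ?_⟩
  have hgP : ∑ i ∈ P, lam i • g i = ∑ i ∈ P, lam i • Vvec σ T Xs i :=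
    sum_congr rfl fun i hi => by simp [g, hi]
  have hgNp : ∑ i ∈ Np, lam i • g i = -∑ i ∈ Np, lam i • Vvec σ T Xs i := by
    rw [← sum_neg_distrib]
    exact sum_congr rfl fun i hi => by simp [g, disjoint_right.1 hdisj hi]
  rwa [sum_union hdisj, hgP, hgNp, ← sub_eq_add_neg, sub_eq_zero] at hlamg

/-- Necessary optimality condition for uniform-loss approximation, one hidden layer:
if `X*` is a local minimizer of `F` with `F(X*) > 0`, `P` the set of positive maximal
deviation points and `Np` the set of negative maximal deviation points, then there are
convex multipliers `λᵢ ≥ 0`, `∑_{i∈P∪Np} λᵢ = 1`, with `∑_{i∈P} λᵢ Vᵢ = ∑_{i∈Np} λᵢ Vᵢ`. -/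
theorem uniform_one_hidden_layer_necessary_condition (d N n : ℕ) (hd : 0 < d) [NeZero N]
    (hn : 0 < n) (σ : ℝ → ℝ) (hσ : ContDiff ℝ 1 σ) (T : Fin N → Fin d → ℝ) (f : Fin N → ℝ)
    (Xs : (Fin n → ℝ) × (Fin n → Fin d → ℝ) × (Fin n → ℝ))
    (hmin : IsLocalMin (unifLoss σ T f) Xs)
    (hpos : 0 < unifLoss σ T f Xs)
    (P Np : Finset (Fin N))
    (hP : ∀ i, i ∈ P ↔ dev σ T f Xs i = unifLoss σ T f Xs)
    (hNp : ∀ i, i ∈ Np ↔ dev σ T f Xs i = -unifLoss σ T f Xs) :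
    ∃ lam : Fin N → ℝ, (∀ i ∈ P ∪ Np, 0 ≤ lam i) ∧
      (∑ i ∈ P ∪ Np, lam i) = 1 ∧
      (∑ i ∈ P, lam i • Vvec σ T Xs i) = ∑ i ∈ Np, lam i • Vvec σ T Xs i :=
  uniform_one_hidden_layer_necessary_condition_general d N n σ hσ T f Xs hmin hpos P Np hP hNp
end

section
/- Let σ : ℝ → ℝ be continuously differentiable, fix discretisation points T_1, …, T_N ∈ ℝ^d and target values f_1, …, f_N ∈ ℝ, and for X = (w_0, w) ∈ ℝ × ℝ^d set dev_i(X) = σ(w·T_i + w_0) − f_i and G(X) = Σ_{i=1}^N |dev_i(X)|. Suppose X* = (w_0*, w*) is a local minimizer of G, and let P = {i : dev_i(X*) > 0}, N = {i : dev_i(X*) < 0}, C = {i : dev_i(X*) = 0}, and v_i = σ'(w*·T_i + w_0*)·(1, T_i) ∈ ℝ^{1+d}. Then Σ_{i∈P} v_i − Σ_{i∈N} v_i belongs to the Minkowski sum Q = Σ_{i∈C} co{v_i, −v_i}. -/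
/-- The deviation at the `i`-th discretisation point for a neural network with no hidden
layer, parameters `X = (w₀, w)`: `dev_i(X) = σ(w ⬝ T_i + w₀) − f_i`. -/
noncomputable def dev0 {d N : ℕ} (σ : ℝ → ℝ) (T : Fin N → Fin d → ℝ) (f : Fin N → ℝ)
    (X : ℝ × (Fin d → ℝ)) (i : Fin N) : ℝ :=
  σ ((∑ k, X.2 k * T i k) + X.1) - f i

/-- The Manhattan (ℓ₁) loss `G(X) = ∑_{i=1}^N |dev_i(X)|`. -/
noncomputable def manhattanLoss0 {d N : ℕ} (σ : ℝ → ℝ) (T : Fin N → Fin d → ℝ)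
    (f : Fin N → ℝ) (X : ℝ × (Fin d → ℝ)) : ℝ :=
  ∑ i, |dev0 σ T f X i|

/-- The vector `v_i = σ'(w ⬝ T_i + w₀) • (1, T_i) ∈ ℝ^{1+d}`. -/
noncomputable def vvec {d N : ℕ} (σ : ℝ → ℝ) (T : Fin N → Fin d → ℝ)
    (X : ℝ × (Fin d → ℝ)) (i : Fin N) : Fin (d + 1) → ℝ :=
  deriv σ ((∑ k, X.2 k * T i k) + X.1) • (Fin.cons 1 (T i) : Fin (d + 1) → ℝ)

/-!
Along a line `t ↦ X* + t • h` each `dev_i` has derivative `D_i` at `0`, so the loss has the right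
derivative `∑_P D_i - ∑_N D_i + ∑_C |D_i|` there, which is nonnegative at a local minimum. When `h`
represents a functional `-ℓ` on `ℝ^{1+d}` we get `D_i = -ℓ (v_i)`, hence
`ℓ (∑_P v_i - ∑_N v_i) ≤ ∑_C |ℓ (v_i)|`, the support function of the compact convex set `Q`.
Hahn–Banach separation then puts the point in `Q`.
-/

open Set Asymptotics
open scoped Pointwise

theorem HasDerivAt.hasDerivWithinAt_abs_Ici_of_eq_zero {g : ℝ → ℝ} {D x : ℝ}
    (hg : HasDerivAt g D x) (hx : g x = 0) :
    HasDerivWithinAt (fun t => |g t|) |D| (Ici x) x := by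
  refine .of_isLittleO <| IsBigO.trans_isLittleO (IsBigO.of_bound' ?_)
    (hg.hasDerivWithinAt (s := Ici x)).isLittleO
  filter_upwards [self_mem_nhdsWithin] with t (ht : x ≤ t)
  have : (t - x) • |D| = |(t - x) • D| := by
    rw [smul_eq_mul, smul_eq_mul, abs_mul, abs_of_nonneg (sub_nonneg.2 ht)]
  simpa only [hx, abs_zero, sub_zero, this, Real.norm_eq_abs] using
    abs_abs_sub_abs_le_abs_sub (g t) ((t - x) • D)

theorem IsLocalMin.hasDerivWithinAt_Ici_nonneg {f : ℝ → ℝ} {f' a : ℝ} (hf : IsLocalMin f a)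
    (hd : HasDerivWithinAt f f' (Ici a) a) : 0 ≤ f' := by
  have hseg : segment ℝ a (a + 1) ⊆ Ici a := by
    rw [segment_eq_Icc (by linarith)]
    exact Icc_subset_Ici_self
  simpa using (hf.on (Ici a)).hasFDerivWithinAt_nonneg hd.hasFDerivWithinAt
    (mem_posTangentConeAt_of_segment_subset hseg)

theorem IsLocalMin.sum_abs_rightDeriv_nonneg {ι : Type*} [Fintype ι] {g : ι → ℝ → ℝ}
    {D : ι → ℝ} {x : ℝ} (hg : ∀ i, HasDerivAt (g i) (D i) x)
    (hmin : IsLocalMin (fun t => ∑ i, |g i t|) x) :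
    0 ≤ (∑ i with 0 < g i x, D i) - (∑ i with g i x < 0, D i) + ∑ i with g i x = 0, |D i| := by
  let l : ι → ℝ := fun i => ((if 0 < g i x then D i else 0) - if g i x < 0 then D i else 0) +
    if g i x = 0 then |D i| else 0
  have hl : ∀ i, HasDerivWithinAt (fun t => |g i t|) (l i) (Ici x) x := by
    intro i
    rcases lt_trichotomy (g i x) 0 with h | h | h
    · simpa [l, h, h.ne, h.not_gt, Function.comp_def] using
        ((hasDerivAt_abs_neg h).comp x (hg i)).hasDerivWithinAt
    · simpa [l, h] using (hg i).hasDerivWithinAt_abs_Ici_of_eq_zero h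
    · simpa [l, h, h.ne', h.not_gt, Function.comp_def] using
        ((hasDerivAt_abs_pos h).comp x (hg i)).hasDerivWithinAt
  have := hmin.hasDerivWithinAt_Ici_nonneg (HasDerivWithinAt.fun_sum fun i _ => hl i)
  simpa only [l, Finset.sum_add_distrib, Finset.sum_sub_distrib, ← Finset.sum_filter] using this

theorem isCompact_finsetSum {ι E : Type*} [AddCommMonoid E] [TopologicalSpace E] [ContinuousAdd E]
    (s : Finset ι) {K : ι → Set E} (hK : ∀ i ∈ s, IsCompact (K i)) : IsCompact (∑ i ∈ s, K i) :=
  Finset.sum_induction _ IsCompact (fun _ _ => IsCompact.add) isCompact_singleton hK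

theorem mem_sum_convexHull_pair_neg_of_forall_le {ι E : Type*} [NormedAddCommGroup E]
    [NormedSpace ℝ E] (s : Finset ι) (v : ι → E) {x : E}
    (hx : ∀ ℓ : StrongDual ℝ E, ℓ x ≤ ∑ i ∈ s, |ℓ (v i)|) :
    x ∈ ∑ i ∈ s, convexHull ℝ {v i, -v i} := by
  by_contra hxQ
  obtain ⟨ℓ, u, hQ, hu⟩ := geometric_hahn_banach_closed_point
    (convex_sum _ fun i _ => convex_convexHull ℝ _)
    (isCompact_finsetSum s fun i _ => (toFinite _).isCompact_convexHull ℝ).isClosed hxQ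
  -- the vertex of `Q` maximising `ℓ`
  have hmax : ∑ i ∈ s, (if 0 ≤ ℓ (v i) then v i else -v i) ∈ ∑ i ∈ s, convexHull ℝ {v i, -v i} :=
    finsetSum_mem_finsetSum _ _ _ fun i _ => subset_convexHull ℝ _ (by split_ifs <;> simp)
  have hval : ℓ (∑ i ∈ s, (if 0 ≤ ℓ (v i) then v i else -v i)) = ∑ i ∈ s, |ℓ (v i)| := by
    rw [map_sum]
    refine Finset.sum_congr rfl fun i _ => ?_
    split_ifs with h
    · exact (abs_of_nonneg h).symm
    · rw [map_neg, abs_of_neg (not_le.1 h)]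
  linarith [hQ _ hmax, hx ℓ]

theorem LinearMap.apply_finCons {R : Type*} [CommSemiring R] {n : ℕ}
    (ℓ : (Fin (n + 1) → R) →ₗ[R] R) (a : R) (b : Fin n → R) :
    ℓ (Fin.cons a b) = a * ℓ (Pi.single 0 1) + ∑ k, b k * ℓ (Pi.single k.succ 1) := by
  rw [pi_apply_eq_sum_univ, Fin.sum_univ_succ]
  simp only [Fin.cons_zero, Fin.cons_succ, smul_eq_mul]
  congr! with k _ j <;> simp [Pi.single_apply, eq_comm]

theorem hasDerivAt_dev0_add_smul {d N : ℕ} {σ : ℝ → ℝ} {T : Fin N → Fin d → ℝ} {f : Fin N → ℝ}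
    {X : ℝ × (Fin d → ℝ)} {i : Fin N} (hσ : DifferentiableAt ℝ σ (∑ k, X.2 k * T i k + X.1))
    (h : ℝ × (Fin d → ℝ)) :
    HasDerivAt (fun t : ℝ => dev0 σ T f (X + t • h) i)
      (deriv σ (∑ k, X.2 k * T i k + X.1) * (∑ k, h.2 k * T i k + h.1)) 0 := by
  have hline : (fun t : ℝ => ∑ k, (X + t • h).2 k * T i k + (X + t • h).1) =
      fun t => (∑ k, X.2 k * T i k + X.1) + t * (∑ k, h.2 k * T i k + h.1) := by
    funext t
    simp only [Prod.snd_add, Prod.fst_add, Prod.smul_fst, Prod.smul_snd, Pi.add_apply,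
      Pi.smul_apply, smul_eq_mul, add_mul, Finset.sum_add_distrib, Finset.mul_sum, mul_add]
    simp only [mul_assoc]
    ring
  have harg : HasDerivAt (fun t : ℝ => ∑ k, (X + t • h).2 k * T i k + (X + t • h).1)
      (∑ k, h.2 k * T i k + h.1) 0 := by
    rw [hline]
    simpa using ((hasDerivAt_id (0 : ℝ)).mul_const (∑ k, h.2 k * T i k + h.1)).const_add
      (∑ k, X.2 k * T i k + X.1)
  have hσ' : HasDerivAt σ (deriv σ (∑ k, X.2 k * T i k + X.1))
      (∑ k, (X + (0 : ℝ) • h).2 k * T i k + (X + (0 : ℝ) • h).1) := by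
    simpa using hσ.hasDerivAt
  exact (hσ'.comp 0 harg).sub_const (f i)

-- Under `ℝ^{1+d} ≃ ℝ × ℝ^d`, `ℓ y = y₀ * h.1 + ∑ k, y (k+1) * h.2 k` for `h = paramDirection ℓ`.
noncomputable def paramDirection {d : ℕ} (ℓ : StrongDual ℝ (Fin (d + 1) → ℝ)) :
    ℝ × (Fin d → ℝ) :=
  (ℓ (Pi.single 0 1), fun k => ℓ (Pi.single k.succ 1))

theorem hasDerivAt_dev0_paramDirection {d N : ℕ} {σ : ℝ → ℝ} {T : Fin N → Fin d → ℝ}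
    {f : Fin N → ℝ} {X : ℝ × (Fin d → ℝ)} {i : Fin N}
    (hσ : DifferentiableAt ℝ σ (∑ k, X.2 k * T i k + X.1)) (ℓ : StrongDual ℝ (Fin (d + 1) → ℝ)) :
    HasDerivAt (fun t : ℝ => dev0 σ T f (X + t • paramDirection ℓ) i) (ℓ (vvec σ T X i)) 0 := by
  convert hasDerivAt_dev0_add_smul hσ (paramDirection ℓ) using 1
  rw [vvec, map_smul, smul_eq_mul, ← ContinuousLinearMap.coe_coe, LinearMap.apply_finCons]
  simp only [paramDirection, ContinuousLinearMap.coe_coe, one_mul, mul_comm (T i _)]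
  ring

theorem manhattan_no_hidden_layer_necessary_condition_general (d N : ℕ)
    (σ : ℝ → ℝ) (hσ : ContDiff ℝ 1 σ) (T : Fin N → Fin d → ℝ) (f : Fin N → ℝ)
    (Xs : ℝ × (Fin d → ℝ))
    (hmin : IsLocalMin (manhattanLoss0 σ T f) Xs)
    (P Np C : Finset (Fin N))
    (hP : ∀ i, i ∈ P ↔ 0 < dev0 σ T f Xs i)
    (hNp : ∀ i, i ∈ Np ↔ dev0 σ T f Xs i < 0)
    (hC : ∀ i, i ∈ C ↔ dev0 σ T f Xs i = 0) :
    (∑ i ∈ P, vvec σ T Xs i) - (∑ i ∈ Np, vvec σ T Xs i) ∈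
      {x : Fin (d + 1) → ℝ | ∃ a : Fin N → Fin (d + 1) → ℝ,
        (∀ i ∈ C, a i ∈ convexHull ℝ {vvec σ T Xs i, -vvec σ T Xs i}) ∧
        x = ∑ i ∈ C, a i} := by
  suffices hdual : ∀ ℓ : StrongDual ℝ (Fin (d + 1) → ℝ),
      ℓ ((∑ i ∈ P, vvec σ T Xs i) - ∑ i ∈ Np, vvec σ T Xs i) ≤ ∑ i ∈ C, |ℓ (vvec σ T Xs i)| by
    obtain ⟨a, ha, hsum⟩ :=
      (mem_finsetSum _ _ _).1 (mem_sum_convexHull_pair_neg_of_forall_le C _ hdual)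
    exact ⟨a, fun i hi => ha hi, hsum.symm⟩
  intro ℓ
  have hmin_line : IsLocalMin (manhattanLoss0 σ T f ∘ fun t : ℝ => Xs + t • paramDirection (-ℓ)) 0 :=
    IsLocalMin.comp_continuous (by simpa using hmin) (by fun_prop)
  have key := IsLocalMin.sum_abs_rightDeriv_nonneg
    (g := fun i t => dev0 σ T f (Xs + t • paramDirection (-ℓ)) i)
    (fun i => hasDerivAt_dev0_paramDirection ((hσ.differentiable one_ne_zero) _) (-ℓ)) hmin_line
  have hPf : ({i | 0 < dev0 σ T f Xs i} : Finset (Fin N)) = P := by ext; simp [hP]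
  have hNpf : ({i | dev0 σ T f Xs i < 0} : Finset (Fin N)) = Np := by ext; simp [hNp]
  have hCf : ({i | dev0 σ T f Xs i = 0} : Finset (Fin N)) = C := by ext; simp [hC]
  simp only [zero_smul, add_zero, hPf, hNpf, hCf, neg_apply, abs_neg,
    Finset.sum_neg_distrib] at key
  rw [map_sub, map_sum, map_sum]
  linarith

/-- Necessary optimality condition for Manhattan (ℓ₁) loss approximation, no hidden layer:
if `X* = (w₀*, w*)` is a local minimizer of `G`, with `P`, `Np`, `C` the sets of indices
with positive, negative and zero deviation respectively, then
`∑_{i∈P} vᵢ − ∑_{i∈Np} vᵢ` belongs to the Minkowski sum `Q = ∑_{i∈C} co{vᵢ, −vᵢ}`. -/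
theorem manhattan_no_hidden_layer_necessary_condition (d N : ℕ) (hd : 0 < d) (hN : 0 < N)
    (σ : ℝ → ℝ) (hσ : ContDiff ℝ 1 σ) (T : Fin N → Fin d → ℝ) (f : Fin N → ℝ)
    (Xs : ℝ × (Fin d → ℝ))
    (hmin : IsLocalMin (manhattanLoss0 σ T f) Xs)
    (P Np C : Finset (Fin N))
    (hP : ∀ i, i ∈ P ↔ 0 < dev0 σ T f Xs i)
    (hNp : ∀ i, i ∈ Np ↔ dev0 σ T f Xs i < 0)
    (hC : ∀ i, i ∈ C ↔ dev0 σ T f Xs i = 0) :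
    (∑ i ∈ P, vvec σ T Xs i) - (∑ i ∈ Np, vvec σ T Xs i) ∈
      {x : Fin (d + 1) → ℝ | ∃ a : Fin N → Fin (d + 1) → ℝ,
        (∀ i ∈ C, a i ∈ convexHull ℝ {vvec σ T Xs i, -vvec σ T Xs i}) ∧
        x = ∑ i ∈ C, a i} :=
  manhattan_no_hidden_layer_necessary_condition_general d N σ hσ T f Xs hmin P Np C hP hNp hC
end

section
/- Let σ : ℝ → ℝ be continuously differentiable, fix discretisation points T_1, …, T_N ∈ ℝ^d and target values f_1, …, f_N ∈ ℝ, and for X = (w_0, w) ∈ ℝ × ℝ^d set dev_i(X) = σ(w·T_i + w_0) − f_i and G(X) = Σ_{i=1}^N |dev_i(X)|. Suppose X* = (w_0*, w*) is a local minimizer of G and dev_i(X*) ≠ 0 for every i = 1, …, N. Then, with P = {i : dev_i(X*) > 0}, N = {i : dev_i(X*) < 0}, and v_i = σ'(w*·T_i + w_0*)·(1, T_i) ∈ ℝ^{1+d}, it holds that Σ_{i∈P} v_i = Σ_{i∈N} v_i. -/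
/-! Since no deviation vanishes at `X*`, each `|dev_i|` is differentiable there with derivative
`sign (dev_i X*) • dev_i'(X*)`, so Fermat's rule for the local minimum `X*` of `G` gives
`∑_{i∈P} dev_i'(X*) = ∑_{i∈N} dev_i'(X*)`. Under the identification `(h₀, h) ↦ (h₀, h₁, …, h_d)`
the linear form `dev_i'(X*)` is the dot product with `v_i`. -/

open Finset

theorem sum_sign_smul_eq_sub {ι M : Type*} [Fintype ι] [AddCommGroup M] [Module ℝ M]
    {a : ι → ℝ} {P Np : Finset ι}
    (hP : ∀ i, i ∈ P ↔ 0 < a i) (hNp : ∀ i, i ∈ Np ↔ a i < 0) (v : ι → M) :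
    ∑ i, (SignType.sign (a i) : ℝ) • v i = ∑ i ∈ P, v i - ∑ i ∈ Np, v i := by
  classical
  have hP' : P = univ.filter (0 < a ·) := by ext i; simp [hP]
  have hNp' : Np = univ.filter (a · < 0) := by ext i; simp [hNp]
  rw [hP', hNp', sum_filter, sum_filter, ← sum_sub_distrib]
  refine sum_congr rfl fun i _ => ?_
  rcases lt_trichotomy (a i) 0 with h | h | h
  · simp [h, h.not_gt]
  · simp [h]
  · simp [h, h.not_gt]

theorem IsLocalMin.sum_sign_smul_eq_zero {ι E : Type*} [Fintype ι] [NormedAddCommGroup E]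
    [NormedSpace ℝ E] {g : ι → E → ℝ} {g' : ι → E →L[ℝ] ℝ} {x : E}
    (hmin : IsLocalMin (fun y => ∑ i, |g i y|) x) (hg : ∀ i, HasFDerivAt (g i) (g' i) x)
    (hne : ∀ i, g i x ≠ 0) :
    ∑ i, (SignType.sign (g i x) : ℝ) • g' i = 0 :=
  hmin.hasFDerivAt_eq_zero (HasFDerivAt.fun_sum fun i _ => (hg i).abs (hne i))

noncomputable def preactivation {d : ℕ} (t : Fin d → ℝ) : (ℝ × (Fin d → ℝ)) →L[ℝ] ℝ :=
  ContinuousLinearMap.fst ℝ ℝ _ +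
    ∑ k, t k • (ContinuousLinearMap.proj k).comp (ContinuousLinearMap.snd ℝ ℝ _)

@[simp]
theorem preactivation_apply {d : ℕ} (t : Fin d → ℝ) (X : ℝ × (Fin d → ℝ)) :
    preactivation t X = (∑ k, X.2 k * t k) + X.1 := by
  simp [preactivation, mul_comm, add_comm]

theorem vvec_dotProduct {d N : ℕ} (σ : ℝ → ℝ) (T : Fin N → Fin d → ℝ) (X : ℝ × (Fin d → ℝ))
    (i : Fin N) (u : Fin (d + 1) → ℝ) :
    vvec σ T X i ⬝ᵥ u =
      (deriv σ (preactivation (T i) X) • preactivation (T i)) (u 0, Fin.tail u) := by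
  simp only [vvec, preactivation_apply, FunLike.coe_smul, Pi.smul_apply, smul_eq_mul,
    dotProduct, Fin.sum_univ_succ, Fin.cons_zero, Fin.cons_succ, Fin.tail, mul_one]
  rw [mul_add, mul_sum, add_comm (_ * _)]
  exact congrArg (· + _) (sum_congr rfl fun k _ => by ring)

theorem hasFDerivAt_dev0 {d N : ℕ} {σ : ℝ → ℝ} (T : Fin N → Fin d → ℝ) (f : Fin N → ℝ)
    {X : ℝ × (Fin d → ℝ)} {i : Fin N} (hσ : DifferentiableAt ℝ σ (preactivation (T i) X)) :
    HasFDerivAt (fun X => dev0 σ T f X i)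
      (deriv σ (preactivation (T i) X) • preactivation (T i)) X := by
  simpa [dev0] using
    (hσ.hasDerivAt.comp_hasFDerivAt X (preactivation (T i)).hasFDerivAt).sub_const (f i)

theorem manhattan_no_hidden_layer_no_zero_deviation_general (d N : ℕ)
    (σ : ℝ → ℝ) (hσ : ContDiff ℝ 1 σ) (T : Fin N → Fin d → ℝ) (f : Fin N → ℝ)
    (Xs : ℝ × (Fin d → ℝ))
    (hmin : IsLocalMin (manhattanLoss0 σ T f) Xs)
    (hne : ∀ i, dev0 σ T f Xs i ≠ 0)
    (P Np : Finset (Fin N))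
    (hP : ∀ i, i ∈ P ↔ 0 < dev0 σ T f Xs i)
    (hNp : ∀ i, i ∈ Np ↔ dev0 σ T f Xs i < 0) :
    (∑ i ∈ P, vvec σ T Xs i) = ∑ i ∈ Np, vvec σ T Xs i := by
  have hcrit := hmin.sum_sign_smul_eq_zero
    (fun i => hasFDerivAt_dev0 T f (hσ.differentiable one_ne_zero _)) hne
  rw [sum_sign_smul_eq_sub hP hNp
    (fun i => deriv σ (preactivation (T i) Xs) • preactivation (T i)), sub_eq_zero] at hcrit
  refine dotProduct_eq _ _ fun u => ?_
  simpa only [sum_dotProduct, vvec_dotProduct, _root_.sum_apply] using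
    congr($hcrit (u 0, Fin.tail u))

/-- Simplified necessary optimality condition for Manhattan (ℓ₁) loss approximation, no
hidden layer, when no discretisation point has zero deviation: if `X* = (w₀*, w*)` is a
local minimizer of `G` and `dev_i(X*) ≠ 0` for all `i`, then with `P` and `Np` the sets of
indices of positive resp. negative deviation, `∑_{i∈P} vᵢ = ∑_{i∈Np} vᵢ`. -/
theorem manhattan_no_hidden_layer_no_zero_deviation (d N : ℕ) (hd : 0 < d) (hN : 0 < N)
    (σ : ℝ → ℝ) (hσ : ContDiff ℝ 1 σ) (T : Fin N → Fin d → ℝ) (f : Fin N → ℝ)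
    (Xs : ℝ × (Fin d → ℝ))
    (hmin : IsLocalMin (manhattanLoss0 σ T f) Xs)
    (hne : ∀ i, dev0 σ T f Xs i ≠ 0)
    (P Np : Finset (Fin N))
    (hP : ∀ i, i ∈ P ↔ 0 < dev0 σ T f Xs i)
    (hNp : ∀ i, i ∈ Np ↔ dev0 σ T f Xs i < 0) :
    (∑ i ∈ P, vvec σ T Xs i) = ∑ i ∈ Np, vvec σ T Xs i :=
  manhattan_no_hidden_layer_no_zero_deviation_general d N σ hσ T f Xs hmin hne P Np hP hNp
end
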